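/- arXiv:1305.4892 — 4 statements merged into one kernel-verified Lean document; each statement's English description precedes it below -/
import Mathlib

section
/- Let s ≥ 3, N ≥ 1 and 0 ≤ x ≤ s^N. The number of level-N configurations X with card X = x such that the N-fold application of the induction map π to X yields the level-0 configuration whose single entry is +1 (i.e., opinion +1 wins the election) equals Σ_{x_1=0}^{s} Σ_{x_2=0}^{s^2} ⋯ Σ_{x_{N−1}=0}^{s^{N−1}} ∏_{n=0}^{N−1} c_n(s, x_n, x_{n+1}), where x_0 = 1 and x_N = x. Consequently, if the bottom-level configuration is chosen uniformly at random among level-N configurations with exactly x entries equal to +1, the probability p_x(N,s) that opinion +1 wins equals C(s^N, x)^{−1} times this sum. -/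
/-- `s' = ⌈(s+1)/2⌉`, the strict-majority threshold for group size `s`. -/
def sPrime (s : ℕ) : ℕ := (s + 2) / 2

/-- Number of entries equal to `+1` (encoded as `true`) in a configuration. -/
def cfgCard {m : ℕ} (X : Fin m → Bool) : ℕ :=
  (Finset.univ.filter fun i => X i = true).card

/-- The one-step induction map `π` sending a level-`(n+1)` configuration to a
level-`n` configuration by the majority rule with ties resolved in favor of `-1`. -/
def piMap (s n : ℕ) (Z : Fin (s ^ (n + 1)) → Bool) : Fin (s ^ n) → Bool :=
  fun i => decide (sPrime s ≤ (Finset.univ.filter fun j : Fin s =>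
    Z ⟨s * (i : ℕ) + (j : ℕ), by
      have h1 : (i : ℕ) + 1 ≤ s ^ n := i.isLt
      have h2 : (j : ℕ) < s := j.isLt
      have h3 : s * ((i : ℕ) + 1) ≤ s * s ^ n := Nat.mul_le_mul_left _ h1
      have h4 : s * ((i : ℕ) + 1) = s * (i : ℕ) + s := by ring
      have h5 : s ^ (n + 1) = s * s ^ n := by rw [pow_succ, Nat.mul_comm]
      omega⟩ = true).card)

/-- `N`-fold application of the induction map, from level `N` down to level `0`. -/
def piIter (s : ℕ) : (N : ℕ) → (Fin (s ^ N) → Bool) → (Fin (s ^ 0) → Bool)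
  | 0 => fun X => X
  | N + 1 => fun X => piIter s N (piMap s N X)

/-- `c_n(s, X, z)`: the number of level-`(n+1)` configurations `Z` with
`card Z = z` and `πZ = X`. -/
def cCount (s n : ℕ) (X : Fin (s ^ n) → Bool) (z : ℕ) : ℕ :=
  (Finset.univ.filter fun Z : Fin (s ^ (n + 1)) → Bool =>
    cfgCard Z = z ∧ piMap s n Z = X).card

/-- The standard configuration with the first `x` entries equal to `+1`. -/
def stdCfg (m x : ℕ) : Fin m → Bool := fun i => decide ((i : ℕ) < x)

/-- `c_n(s, x, z) := c_n(s, X_x, z)` where `X_x` is the standard level-`n`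
configuration with `x` entries equal to `+1`. -/
def cFix (s n x z : ℕ) : ℕ := cCount s n (stdCfg (s ^ n) x) z

/-!
Write `P(N, x)` for the number of winning level-`N` configurations with `x` entries `+1`.
Grouping the winning level-`(N+1)` configurations `Z` by `Y = π Z` gives
`P(N+1, x) = Σ_{Y winning} c_N(s, Y, x)`. Permuting the groups of `Z` permutes the entries of
`π Z` and preserves `card Z`, so `c_N(s, Y, x)` depends only on `card Y`; grouping `Y` by its
card yields `P(N+1, x) = Σ_y P(N, y) c_N(s, y, x)`. The iterated sum satisfies the same
recursion, by splitting off the last coordinate of its summation tuple, and both equal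
`c_0(s, 1, x)` at `N = 1`.
-/

open Finset

theorem Finset.sum_piFinset_snoc {α M : Type*} [AddCommMonoid M] {N : ℕ}
    (t : Fin N → Finset α) (A : Finset α) (g : (Fin (N + 1) → α) → M) :
    ∑ f ∈ Fintype.piFinset (Fin.snoc t A : Fin (N + 1) → Finset α), g f
      = ∑ a ∈ A, ∑ f ∈ Fintype.piFinset t, g (Fin.snoc f a) := by
  have h := filter_piFinset_eq_map_snocEquiv (Fin.snoc t A : Fin (N + 1) → Finset α)
    (fun _ => True)
  simp only [filter_true, Fin.snoc_last, Fin.init_snoc] at h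
  rw [h, sum_map, sum_product]
  rfl

section walk

variable {α R : Type*} [CommSemiring R] (w : ℕ → α → α → R)

def walkSum {N : ℕ} (t : Fin (N + 1) → Finset α) : R :=
  ∑ f ∈ Fintype.piFinset t, ∏ n : Fin N, w n (f n.castSucc) (f n.succ)

theorem walkSum_snoc_snoc {N : ℕ} (t : Fin (N + 1) → Finset α) (B : Finset α) (z : α) :
    walkSum w (Fin.snoc (Fin.snoc t B) {z} : Fin (N + 3) → Finset α)
      = ∑ y ∈ B, walkSum w (Fin.snoc t {y} : Fin (N + 2) → Finset α) * w (N + 1) y z := by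
  simp only [walkSum, Finset.sum_piFinset_snoc, sum_singleton, sum_mul]
  refine sum_congr rfl fun y _ => sum_congr rfl fun f _ => ?_
  rw [Fin.prod_univ_castSucc]
  simp only [Fin.snoc_castSucc, Fin.snoc_last, Fin.succ_last]
  congr 1
  refine prod_congr rfl fun n _ => ?_
  rw [Fin.succ_castSucc, Fin.snoc_castSucc, Fin.val_castSucc]

end walk

/-- `(i, j)` is the `j`-th member of group `i`, at index `s * i + j`. -/
def blockEquiv (s n : ℕ) : Fin (s ^ n) × Fin s ≃ Fin (s ^ (n + 1)) :=
  finProdFinEquiv.trans (finCongr (pow_succ s n).symm)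

theorem piMap_apply (s n : ℕ) (Z : Fin (s ^ (n + 1)) → Bool) (i : Fin (s ^ n)) :
    piMap s n Z i = decide (sPrime s ≤ #{j : Fin s | Z (blockEquiv s n (i, j)) = true}) := by
  simp only [piMap]
  congr! with j
  simp [blockEquiv, finProdFinEquiv, add_comm]

theorem cfgCard_comp_perm {m : ℕ} (X : Fin m → Bool) (σ : Equiv.Perm (Fin m)) :
    cfgCard (X ∘ σ) = cfgCard X :=
  card_equiv σ (by simp)

theorem piMap_comp_permCongr (s n : ℕ) (Z : Fin (s ^ (n + 1)) → Bool)
    (σ : Equiv.Perm (Fin (s ^ n))) :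
    piMap s n (Z ∘ (blockEquiv s n).permCongr (σ.prodCongr (Equiv.refl _))) = piMap s n Z ∘ σ := by
  funext i
  simp [piMap_apply, Equiv.permCongr_apply]

theorem exists_perm_comp_eq {m : ℕ} {X Y : Fin m → Bool} (h : cfgCard X = cfgCard Y) :
    ∃ σ : Equiv.Perm (Fin m), Y ∘ σ = X := by
  have hfiber : ∀ b, Fintype.card {i // X i = b} = Fintype.card {i // Y i = b} := by
    have htrue : Fintype.card {i // X i = true} = Fintype.card {i // Y i = true} := by
      simpa only [cfgCard, Fintype.card_subtype] using h
    rintro (_ | _)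
    · simp only [← Bool.not_eq_true]
      rw [Fintype.card_subtype_compl, Fintype.card_subtype_compl, htrue]
    · exact htrue
  exact ⟨Equiv.ofFiberEquiv fun b => Fintype.equivOfCardEq (hfiber b),
    funext (Equiv.ofFiberEquiv_map _)⟩

theorem cCount_comp_perm (s n : ℕ) (X : Fin (s ^ n) → Bool) (σ : Equiv.Perm (Fin (s ^ n)))
    (z : ℕ) : cCount s n (X ∘ σ) z = cCount s n X z := by
  set τ := (blockEquiv s n).permCongr (σ.prodCongr (Equiv.refl (Fin s)))
  refine (card_equiv (τ.symm.arrowCongr (Equiv.refl Bool)) fun Z => ?_).symm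
  simp only [mem_filter, mem_univ, true_and]
  change _ ↔ cfgCard (Z ∘ τ) = z ∧ piMap s n (Z ∘ τ) = X ∘ σ
  simp only [cfgCard_comp_perm, τ, piMap_comp_permCongr, σ.surjective.injective_comp_right.eq_iff]

theorem cfgCard_stdCfg {m x : ℕ} (hx : x ≤ m) : cfgCard (stdCfg m x) = x := by
  simpa [cfgCard, stdCfg, hx] using Fin.card_filter_val_lt (n := m) (m := x)

theorem cfgCard_le {m : ℕ} (X : Fin m → Bool) : cfgCard X ≤ m :=
  (card_filter_le _ _).trans_eq (card_fin m)

theorem cCount_eq_cFix (s n : ℕ) (X : Fin (s ^ n) → Bool) (z : ℕ) :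
    cCount s n X z = cFix s n (cfgCard X) z := by
  obtain ⟨σ, hσ⟩ := exists_perm_comp_eq (cfgCard_stdCfg (cfgCard_le X)).symm
  rw [cFix, ← cCount_comp_perm s n (stdCfg _ _) σ, hσ]

def winCount (s N x : ℕ) : ℕ :=
  #{X : Fin (s ^ N) → Bool | cfgCard X = x ∧ piIter s N X = fun _ => true}

theorem winCount_succ_eq_sum_cCount (s N x : ℕ) :
    winCount s (N + 1) x = ∑ Y : Fin (s ^ N) → Bool with piIter s N Y = (fun _ => true),
      cCount s N Y x := by
  rw [winCount, card_eq_sum_card_fiberwise (f := piMap s N)]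
  · refine sum_congr rfl fun Y hY => ?_
    rw [mem_filter] at hY
    rw [cCount, filter_filter]
    refine congrArg card (filter_congr fun Z _ => ?_)
    constructor
    · exact fun ⟨⟨hc, _⟩, hZ⟩ => ⟨hc, hZ⟩
    · rintro ⟨hc, hZ⟩
      exact ⟨⟨hc, (congrArg (piIter s N) hZ).trans hY.2⟩, hZ⟩
  · exact fun X hX => mem_filter.mpr ⟨mem_univ _, (mem_filter.mp hX).2.2⟩

theorem winCount_succ (s N x : ℕ) :
    winCount s (N + 1) x = ∑ y ∈ range (s ^ N + 1), winCount s N y * cFix s N y x := by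
  have hmaps : ∀ Y ∈ ({Y | piIter s N Y = fun _ => true} : Finset (Fin (s ^ N) → Bool)),
      cfgCard Y ∈ range (s ^ N + 1) :=
    fun Y _ => mem_range_succ_iff.mpr (cfgCard_le Y)
  simp_rw [winCount_succ_eq_sum_cCount, cCount_eq_cFix]
  rw [← sum_fiberwise_of_maps_to' hmaps (fun y => cFix s N y x)]
  simp_rw [sum_const, smul_eq_mul]
  refine sum_congr rfl fun y _ => congrArg (· * _) ?_
  rw [winCount, filter_filter]
  simp_rw [and_comm]

theorem winCount_one (s x : ℕ) : winCount s 1 x = cFix s 0 1 x := by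
  have hstd : stdCfg (s ^ 0) 1 = fun _ => true := by
    funext i
    simp [stdCfg, Fin.val_eq_zero i]
  rw [cFix, hstd]
  rfl

def levelRanges (s M : ℕ) (k : Fin (M + 1)) : Finset ℕ :=
  if (k : ℕ) = 0 then {1} else range (s ^ (k : ℕ) + 1)

theorem levelRanges_succ (s M : ℕ) :
    levelRanges s (M + 1) = Fin.snoc (levelRanges s M) (range (s ^ (M + 1) + 1)) := by
  funext k
  induction k using Fin.lastCases <;> simp [levelRanges]

theorem ite_eq_snoc_levelRanges (s M x : ℕ) :
    (fun n : Fin (M + 2) => if (n : ℕ) = 0 then {1} else if (n : ℕ) = M + 1 then {x}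
      else range (s ^ (n : ℕ) + 1)) = Fin.snoc (levelRanges s M) {x} := by
  funext k
  induction k using Fin.lastCases with
  | last => simp
  | cast k => simp [levelRanges, k.isLt.ne]

theorem winCount_eq_walkSum (s M x : ℕ) :
    winCount s (M + 1) x = walkSum (cFix s) (Fin.snoc (levelRanges s M) {x}) := by
  induction M generalizing x with
  | zero =>
    have hstart : levelRanges s 0 = fun _ => {1} := funext fun k => by simp [levelRanges]
    rw [winCount_one, walkSum, Finset.sum_piFinset_snoc, hstart,
      Fintype.piFinset_singleton (fun _ => 1), sum_singleton, sum_singleton, Fin.prod_univ_one]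
    rfl
  | succ M ih =>
    rw [winCount_succ, levelRanges_succ, walkSum_snoc_snoc]
    simp_rw [ih]

theorem bottom_up_hierarchical_system_general (s N x : ℕ) (hN : 1 ≤ N) :
    (Finset.univ.filter fun X : Fin (s ^ N) → Bool =>
        cfgCard X = x ∧ piIter s N X = fun _ => true).card
      = ∑ f ∈ Fintype.piFinset (fun n : Fin (N + 1) =>
          if (n : ℕ) = 0 then {1}
          else if (n : ℕ) = N then {x}
          else Finset.range (s ^ (n : ℕ) + 1)),
          ∏ n : Fin N, cFix s n (f n.castSucc) (f n.succ)
    ∧ ((Finset.univ.filter fun X : Fin (s ^ N) → Bool =>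
        cfgCard X = x ∧ piIter s N X = fun _ => true).card : ℝ)
          / ((s ^ N).choose x : ℝ)
      = (((s ^ N).choose x : ℝ))⁻¹
        * ((∑ f ∈ Fintype.piFinset (fun n : Fin (N + 1) =>
            if (n : ℕ) = 0 then {1}
            else if (n : ℕ) = N then {x}
            else Finset.range (s ^ (n : ℕ) + 1)),
            ∏ n : Fin N, cFix s n (f n.castSucc) (f n.succ) : ℕ) : ℝ) := by
  obtain ⟨M, rfl⟩ : ∃ M, N = M + 1 := ⟨N - 1, by omega⟩
  have hcount : winCount s (M + 1) x = walkSum (cFix s) (fun n : Fin (M + 2) =>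
      if (n : ℕ) = 0 then {1} else if (n : ℕ) = M + 1 then {x} else range (s ^ (n : ℕ) + 1)) := by
    rw [ite_eq_snoc_levelRanges, winCount_eq_walkSum]
  refine ⟨hcount, ?_⟩
  rw [div_eq_inv_mul]
  exact congrArg (_ * ·) (congrArg Nat.cast hcount)

/-- Theorem 1 (bottom-up hierarchical system): the number of level-`N`
configurations with `x` entries `+1` electing a `+1` president equals the
Chapman–Kolmogorov type sum, and consequently the winning probability
`p_x(N,s)` equals `C(s^N, x)⁻¹` times this sum. -/
theorem bottom_up_hierarchical_system (s N x : ℕ) (hs : 3 ≤ s) (hN : 1 ≤ N)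
    (hx : x ≤ s ^ N) :
    (Finset.univ.filter fun X : Fin (s ^ N) → Bool =>
        cfgCard X = x ∧ piIter s N X = fun _ => true).card
      = ∑ f ∈ Fintype.piFinset (fun n : Fin (N + 1) =>
          if (n : ℕ) = 0 then {1}
          else if (n : ℕ) = N then {x}
          else Finset.range (s ^ (n : ℕ) + 1)),
          ∏ n : Fin N, cFix s n (f n.castSucc) (f n.succ)
    ∧ ((Finset.univ.filter fun X : Fin (s ^ N) → Bool =>
        cfgCard X = x ∧ piIter s N X = fun _ => true).card : ℝ)
          / ((s ^ N).choose x : ℝ)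
      = (((s ^ N).choose x : ℝ))⁻¹
        * ((∑ f ∈ Fintype.piFinset (fun n : Fin (N + 1) =>
            if (n : ℕ) = 0 then {1}
            else if (n : ℕ) = N then {x}
            else Finset.range (s ^ (n : ℕ) + 1)),
            ∏ n : Fin N, cFix s n (f n.castSucc) (f n.succ) : ℕ) : ℝ) :=
  bottom_up_hierarchical_system_general s N x hN
end

section
/- Let N ≥ 4 and suppose p : {0,…,N} → ℝ satisfies p(0) = 0, p(N) = 1 and the first-step equations p(x) = q₋₁(x) p(x−1) + (1 − q₋₁(x) − q₁(x)) p(x) + q₁(x) p(x+1) for all 0 < x < N. Then for every x with 2 ≤ x ≤ N − 2, p(x) = 2^{−(N−3)} Σ_{z=0}^{x−2} C(N−3, z). In particular, the probability p_x(N,3) that opinion +1 eventually wins the public debate starting from x supporters is given by this formula. -/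
/-- `q₋₁(x) = x·C(N−x,2)/C(N,3)`: probability that the number of `+1`
supporters decreases by one in the size-3 public debate model. -/
noncomputable def qMinus (N x : ℕ) : ℝ :=
  (x : ℝ) * ((N - x).choose 2 : ℝ) / (N.choose 3 : ℝ)

/-- `q₁(x) = C(x,2)·(N−x)/C(N,3)`: probability that the number of `+1`
supporters increases by one in the size-3 public debate model. -/
noncomputable def qPlus (N x : ℕ) : ℝ :=
  (x.choose 2 : ℝ) * ((N - x : ℕ) : ℝ) / (N.choose 3 : ℝ)

private lemma aux_choose (k j : ℕ) :
    ((k+2).choose 2 : ℝ) * (j+2) * ((k+j+1).choose (k+1) : ℝ)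
      = (k+2) * ((j+2).choose 2 : ℝ) * ((k+j+1).choose k : ℝ) := by
  have h1 : ((k+2).choose 2 : ℝ) = ((k:ℝ)+2) * ((k:ℝ)+1) / 2 := by
    rw [Nat.cast_choose_two]; push_cast; ring
  have h2 : ((j+2).choose 2 : ℝ) = ((j:ℝ)+2) * ((j:ℝ)+1) / 2 := by
    rw [Nat.cast_choose_two]; push_cast; ring
  have h3 : ((k+j+1).choose (k+1) : ℝ) * ((k:ℝ)+1)
      = ((k+j+1).choose k : ℝ) * ((j:ℝ)+1) := by
    have := Nat.choose_succ_right_eq (k+j+1) k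
    have h4 : k + j + 1 - k = j + 1 := by omega
    rw [h4] at this
    exact_mod_cast congrArg (Nat.cast (R := ℝ)) this
  rw [h1, h2]
  linear_combination (((k:ℝ)+2) * ((j:ℝ)+2) / 2) * h3

/-- Theorem 2, first part (non-spatial public debate model, majority rule,
group size 3): the winning probability of opinion `+1` starting from `x`
supporters is `p_x(N,3) = 2^{-(N-3)} Σ_{z=0}^{x-2} C(N-3, z)`. -/
theorem debate_majority_three (N : ℕ) (hN : 4 ≤ N) (p : ℕ → ℝ)
    (h0 : p 0 = 0) (h1 : p N = 1)
    (hstep : ∀ x, 0 < x → x < N →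
      p x = qMinus N x * p (x - 1)
        + (1 - qMinus N x - qPlus N x) * p x
        + qPlus N x * p (x + 1)) :
    ∀ x, 2 ≤ x → x ≤ N - 2 →
      p x = (∑ z ∈ Finset.range (x - 1), ((N - 3).choose z : ℝ)) / 2 ^ (N - 3) := by
  obtain ⟨m, rfl⟩ : ∃ m, N = m + 4 := ⟨N - 4, by omega⟩
  have hc : (0:ℝ) < ((m+4).choose 3 : ℝ) := by
    exact_mod_cast Nat.choose_pos (by omega)
  -- rearranged first-step equation
  have hrec : ∀ x, 0 < x → x < m + 4 →
      qPlus (m+4) x * (p (x+1) - p x) = qMinus (m+4) x * (p x - p (x-1)) := by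
    intro x hx1 hx2
    linear_combination -(hstep x hx1 hx2)
  -- p 1 = 0
  have hp1 : p 1 = 0 := by
    have h := hrec 1 (by omega) (by omega)
    have hq1 : qPlus (m+4) 1 = 0 := by
      simp [qPlus]
    rw [hq1, zero_mul] at h
    have hqm : qMinus (m+4) 1 ≠ 0 := by
      have h2 : m + 4 - 1 = m + 3 := by omega
      simp only [qMinus, h2, Nat.cast_one, one_mul]
      have : (0:ℝ) < ((m+3).choose 2 : ℝ) := by
        exact_mod_cast Nat.choose_pos (by omega)
      positivity
    have := mul_eq_zero.mp h.symm
    simp only [h0] at this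
    rcases this with h' | h'
    · exact absurd h' hqm
    · linarith
  -- p (m+3) = 1
  have hpN1 : p (m+3) = 1 := by
    have h := hrec (m+3) (by omega) (by omega)
    have hqm : qMinus (m+4) (m+3) = 0 := by
      have h2 : m + 4 - (m+3) = 1 := by omega
      simp [qMinus, h2]
    have hqp : qPlus (m+4) (m+3) ≠ 0 := by
      have h2 : m + 4 - (m+3) = 1 := by omega
      simp only [qPlus, h2, Nat.cast_one, mul_one]
      have : (0:ℝ) < ((m+3).choose 2 : ℝ) := by
        exact_mod_cast Nat.choose_pos (by omega)
      positivity
    rw [hqm, zero_mul] at h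
    have h3 : m + 3 + 1 = m + 4 := by omega
    rw [h3, h1] at h
    have := mul_eq_zero.mp h
    rcases this with h' | h'
    · exact absurd h' hqp
    · linarith
  -- increments
  have key : ∀ k, k ≤ m + 1 → p (k+2) - p (k+1) = p 2 * ((m+1).choose k : ℝ) := by
    intro k hk
    induction k with
    | zero => simp [hp1]
    | succ k ih =>
      have hk' : k ≤ m := by omega
      have ihk := ih (by omega)
      obtain ⟨j, rfl⟩ : ∃ j, m = k + j := ⟨m - k, by omega⟩
      have h := hrec (k+2) (by omega) (by omega)
      have hsub : k + 2 - 1 = k + 1 := by omega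
      rw [hsub, ihk] at h
      have hqp : qPlus (k+j+4) (k+2) ≠ 0 := by
        have h2 : k + j + 4 - (k+2) = j + 2 := by omega
        simp only [qPlus, h2]
        have hx : (0:ℝ) < ((k+2).choose 2 : ℝ) := by
          exact_mod_cast Nat.choose_pos (by omega)
        have hc' : (0:ℝ) < (((k+j+4)).choose 3 : ℝ) := by
          exact_mod_cast Nat.choose_pos (by omega)
        positivity
      apply mul_left_cancel₀ hqp
      rw [show k + 1 + 2 = (k+2) + 1 from by omega, show k + 1 + 1 = k + 2 from by omega, h]
      -- now: qMinus * (p 2 * C) = qPlus * (p 2 * C')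
      have h2 : k + j + 4 - (k+2) = j + 2 := by omega
      simp only [qMinus, qPlus, h2]
      have hC := aux_choose k j
      push_cast at hC ⊢
      field_simp
      linear_combination (-(p 2)) * hC
  -- telescoping to find p 2
  have htel : ∀ n, (∑ i ∈ Finset.range n, (p (i+1+1) - p (i+1))) = p (n+1) - p 1 :=
    fun n => Finset.sum_range_sub (fun i => p (i+1)) n
  have hp2 : p 2 * 2 ^ (m+1) = 1 := by
    have h := htel (m+2)
    rw [show m + 2 + 1 = m + 3 from by omega, hpN1, hp1, sub_zero] at h
    have h2 : (∑ i ∈ Finset.range (m+2), (p (i+1+1) - p (i+1)))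
        = p 2 * (∑ i ∈ Finset.range (m+2), ((m+1).choose i : ℝ)) := by
      rw [Finset.mul_sum]
      apply Finset.sum_congr rfl
      intro i hi
      rw [Finset.mem_range] at hi
      rw [show i + 1 + 1 = i + 2 from by omega]
      exact key i (by omega)
    have h3 : (∑ i ∈ Finset.range (m+2), ((m+1).choose i : ℝ)) = 2 ^ (m+1) := by
      have := Nat.sum_range_choose (m+1)
      exact_mod_cast congrArg (Nat.cast (R := ℝ)) this
    rw [h2, h3] at h
    linarith
  -- conclusion
  intro x hx2 hxN
  obtain ⟨k, rfl⟩ : ∃ k, x = k + 2 := ⟨x - 2, by omega⟩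
  have hk : k ≤ m := by omega
  have h := htel (k+1)
  rw [show k + 1 + 1 = k + 2 from by omega, hp1, sub_zero] at h
  have h2 : (∑ i ∈ Finset.range (k+1), (p (i+1+1) - p (i+1)))
      = p 2 * (∑ i ∈ Finset.range (k+1), ((m+1).choose i : ℝ)) := by
    rw [Finset.mul_sum]
    apply Finset.sum_congr rfl
    intro i hi
    rw [Finset.mem_range] at hi
    rw [show i + 1 + 1 = i + 2 from by omega]
    exact key i (by omega)
  rw [h2] at h
  have hN3 : m + 4 - 3 = m + 1 := by omega
  have hx1 : k + 2 - 1 = k + 1 := by omega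
  rw [hN3, hx1, ← h]
  have hpow : (0:ℝ) < 2 ^ (m+1) := by positivity
  field_simp
  linear_combination (∑ i ∈ Finset.range (k+1), ((m+1).choose i : ℝ)) * hp2
end

section
/- Fix c ∈ (0,1) and set x_N = ⌊cN⌋. Then lim_{N→∞} (q₁(x_N) − q₋₁(x_N) − 2 q₋₂(x_N))/(q₁(x_N) + q₋₁(x_N) + q₋₂(x_N)) = 6 (c − c₋)(c − c₊)/(c² − c + 2), where c₋ = (1−√13)/6 and c₊ = (1+√13)/6. In particular, the mean drift of the jump chain of the public debate model with group size 4 is asymptotically negative for c ∈ (0, c₊) and positive for c ∈ (c₊, 1). -/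
/-- `q₁(x) = C(x,3)·(N−x)/C(N,4)`: probability of a `+1` jump in the size-4
public debate model with population `N`. -/
noncomputable def q1 (N x : ℕ) : ℝ :=
  (x.choose 3 : ℝ) * ((N - x : ℕ) : ℝ) / (N.choose 4 : ℝ)

/-- `q₋₁(x) = x·C(N−x,3)/C(N,4)`: probability of a `−1` jump in the size-4
public debate model with population `N`. -/
noncomputable def qm1 (N x : ℕ) : ℝ :=
  (x : ℝ) * ((N - x).choose 3 : ℝ) / (N.choose 4 : ℝ)

/-- `q₋₂(x) = C(x,2)·C(N−x,2)/C(N,4)`: probability of a `−2` jump in the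
size-4 public debate model with population `N`. -/
noncomputable def qm2 (N x : ℕ) : ℝ :=
  (x.choose 2 : ℝ) * ((N - x).choose 2 : ℝ) / (N.choose 4 : ℝ)

lemma cast_choose_two' (n : ℕ) : (n.choose 2 : ℝ) = n * (n - 1) / 2 := by
  induction n with
  | zero => norm_num
  | succ d hd =>
    rw [Nat.choose_succ_succ d 1, Nat.choose_one_right]; push_cast [hd]; ring

lemma cast_choose_three' (n : ℕ) : (n.choose 3 : ℝ) = n * (n - 1) * (n - 2) / 6 := by
  induction n with
  | zero => norm_num
  | succ d hd =>
    rw [Nat.choose_succ_succ d 2]; push_cast [hd, cast_choose_two']; ring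

lemma cast_choose_four' (n : ℕ) : (n.choose 4 : ℝ) = n * (n - 1) * (n - 2) * (n - 3) / 24 := by
  induction n with
  | zero => norm_num
  | succ d hd =>
    rw [Nat.choose_succ_succ d 3]; push_cast [hd, cast_choose_three']; ring

set_option maxHeartbeats 1000000 in
/-- Asymptotic mean drift of the jump chain of the size-4 public debate model
along `x_N = ⌊cN⌋`: the drift converges to `6(c−c₋)(c−c₊)/(c²−c+2)` where
`c₋ = (1−√13)/6` and `c₊ = (1+√13)/6`; in particular the limiting drift is
negative for `c ∈ (0, c₊)` and positive for `c ∈ (c₊, 1)`. -/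
theorem drift_limit (c : ℝ) (hc : c ∈ Set.Ioo (0 : ℝ) 1) :
    Filter.Tendsto
      (fun N : ℕ =>
        (q1 N ⌊c * (N : ℝ)⌋₊ - qm1 N ⌊c * (N : ℝ)⌋₊ - 2 * qm2 N ⌊c * (N : ℝ)⌋₊)
          / (q1 N ⌊c * (N : ℝ)⌋₊ + qm1 N ⌊c * (N : ℝ)⌋₊ + qm2 N ⌊c * (N : ℝ)⌋₊))
      Filter.atTop
      (nhds (6 * (c - (1 - Real.sqrt 13) / 6) * (c - (1 + Real.sqrt 13) / 6)
        / (c ^ 2 - c + 2)))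
    ∧ (c < (1 + Real.sqrt 13) / 6 →
        6 * (c - (1 - Real.sqrt 13) / 6) * (c - (1 + Real.sqrt 13) / 6)
          / (c ^ 2 - c + 2) < 0)
    ∧ ((1 + Real.sqrt 13) / 6 < c →
        0 < 6 * (c - (1 - Real.sqrt 13) / 6) * (c - (1 + Real.sqrt 13) / 6)
          / (c ^ 2 - c + 2)) := by
  classical
  obtain ⟨hc0, hc1⟩ := hc
  -- basic facts
  have hQpos : 0 < c ^ 2 - c + 2 := by nlinarith [sq_nonneg (c - 1/2)]
  have hs : Real.sqrt 13 ^ 2 = 13 := Real.sq_sqrt (by norm_num)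
  have hs3 : 3 < Real.sqrt 13 := by nlinarith [Real.sqrt_nonneg 13]
  -- the floor sequence
  have hxle : ∀ N : ℕ, ⌊c * (N : ℝ)⌋₊ ≤ N := by
    intro N
    have : c * (N : ℝ) ≤ (N : ℝ) := by nlinarith [Nat.cast_nonneg (α := ℝ) N]
    calc ⌊c * (N : ℝ)⌋₊ ≤ ⌊(N : ℝ)⌋₊ := Nat.floor_le_floor this
      _ = N := Nat.floor_natCast N
  have he : Filter.Tendsto (fun N : ℕ => (N : ℝ)⁻¹) Filter.atTop (nhds 0) :=
    tendsto_inv_atTop_zero.comp tendsto_natCast_atTop_atTop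
  have hu : Filter.Tendsto (fun N : ℕ => (⌊c * (N : ℝ)⌋₊ : ℝ) / N) Filter.atTop (nhds c) := by
    have hlow : Filter.Tendsto (fun N : ℕ => c - (N : ℝ)⁻¹) Filter.atTop (nhds c) := by
      simpa using tendsto_const_nhds.sub he
    refine tendsto_of_tendsto_of_tendsto_of_le_of_le' hlow tendsto_const_nhds ?_ ?_
    · filter_upwards [Filter.eventually_ge_atTop 1] with N hN
      have hN0 : (0:ℝ) < N := by exact_mod_cast hN
      rw [sub_le_iff_le_add, div_add' _ _ _ hN0.ne', le_div_iff₀ hN0]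
      have h1 : c * (N:ℝ) - 1 < (⌊c * (N : ℝ)⌋₊ : ℝ) := Nat.sub_one_lt_floor _
      have : (N:ℝ)⁻¹ * N = 1 := inv_mul_cancel₀ hN0.ne'
      nlinarith
    · filter_upwards [Filter.eventually_ge_atTop 1] with N hN
      have hN0 : (0:ℝ) < N := by exact_mod_cast hN
      rw [div_le_iff₀ hN0]
      exact Nat.floor_le (by positivity)
  have hpair : Filter.Tendsto (fun N : ℕ => ((⌊c * (N : ℝ)⌋₊ : ℝ) / N, (N : ℝ)⁻¹))
      Filter.atTop (nhds (c, 0)) := hu.prodMk_nhds he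
  -- a reusable denominator limit
  have cden : Continuous (fun p : ℝ × ℝ =>
      (1 - p.2) * (1 - 2 * p.2) * (1 - 3 * p.2) / 24) := by fun_prop
  have hden0 := (cden.tendsto (c, 0)).comp hpair
  -- q1 limit
  have hq1 : Filter.Tendsto (fun N : ℕ => q1 N ⌊c * (N : ℝ)⌋₊) Filter.atTop
      (nhds (4 * c^3 * (1 - c))) := by
    have cnum : Continuous (fun p : ℝ × ℝ =>
        p.1 * (p.1 - p.2) * (p.1 - 2 * p.2) * (1 - p.1) / 6) := by fun_prop
    have hF := ((cnum.tendsto (c, 0)).comp hpair).div hden0 (by norm_num)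
    have hval : c * (c - 0) * (c - 2 * 0) * (1 - c) / 6 /
        ((1 - 0) * (1 - 2 * 0) * (1 - 3 * 0) / 24) = 4 * c^3 * (1 - c) := by ring
    rw [hval] at hF
    refine hF.congr' ?_
    filter_upwards [Filter.eventually_ge_atTop 4] with N hN
    have hx : ⌊c * (N : ℝ)⌋₊ ≤ N := hxle N
    have hN4 : (4:ℝ) ≤ (N:ℝ) := by exact_mod_cast hN
    have hN0 : (N:ℝ) ≠ 0 := by linarith
    have h1 : (N:ℝ) - 1 ≠ 0 := by linarith
    have h2 : (N:ℝ) - 2 ≠ 0 := by linarith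
    have h3 : (N:ℝ) - 3 ≠ 0 := by linarith
    simp only [Function.comp_apply, Pi.div_apply]
    show _ = q1 N ⌊c * (N : ℝ)⌋₊
    rw [q1, cast_choose_three', cast_choose_four', Nat.cast_sub hx]
    field_simp
  -- qm1 limit
  have hqm1 : Filter.Tendsto (fun N : ℕ => qm1 N ⌊c * (N : ℝ)⌋₊) Filter.atTop
      (nhds (4 * c * (1 - c)^3)) := by
    have cnum : Continuous (fun p : ℝ × ℝ =>
        p.1 * (1 - p.1) * (1 - p.1 - p.2) * (1 - p.1 - 2 * p.2) / 6) := by fun_prop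
    have hF := ((cnum.tendsto (c, 0)).comp hpair).div hden0 (by norm_num)
    have hval : c * (1 - c) * (1 - c - 0) * (1 - c - 2 * 0) / 6 /
        ((1 - 0) * (1 - 2 * 0) * (1 - 3 * 0) / 24) = 4 * c * (1 - c)^3 := by ring
    rw [hval] at hF
    refine hF.congr' ?_
    filter_upwards [Filter.eventually_ge_atTop 4] with N hN
    have hx : ⌊c * (N : ℝ)⌋₊ ≤ N := hxle N
    have hN4 : (4:ℝ) ≤ (N:ℝ) := by exact_mod_cast hN
    have hN0 : (N:ℝ) ≠ 0 := by linarith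
    have h1 : (N:ℝ) - 1 ≠ 0 := by linarith
    have h2 : (N:ℝ) - 2 ≠ 0 := by linarith
    have h3 : (N:ℝ) - 3 ≠ 0 := by linarith
    simp only [Function.comp_apply, Pi.div_apply]
    show _ = qm1 N ⌊c * (N : ℝ)⌋₊
    rw [qm1, cast_choose_three', cast_choose_four', Nat.cast_sub hx]
    field_simp
  -- qm2 limit
  have hqm2 : Filter.Tendsto (fun N : ℕ => qm2 N ⌊c * (N : ℝ)⌋₊) Filter.atTop
      (nhds (6 * c^2 * (1 - c)^2)) := by
    have cnum : Continuous (fun p : ℝ × ℝ =>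
        p.1 * (p.1 - p.2) * (1 - p.1) * (1 - p.1 - p.2) / 4) := by fun_prop
    have hF := ((cnum.tendsto (c, 0)).comp hpair).div hden0 (by norm_num)
    have hval : c * (c - 0) * (1 - c) * (1 - c - 0) / 4 /
        ((1 - 0) * (1 - 2 * 0) * (1 - 3 * 0) / 24) = 6 * c^2 * (1 - c)^2 := by ring
    rw [hval] at hF
    refine hF.congr' ?_
    filter_upwards [Filter.eventually_ge_atTop 4] with N hN
    have hx : ⌊c * (N : ℝ)⌋₊ ≤ N := hxle N
    have hN4 : (4:ℝ) ≤ (N:ℝ) := by exact_mod_cast hN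
    have hN0 : (N:ℝ) ≠ 0 := by linarith
    have h1 : (N:ℝ) - 1 ≠ 0 := by linarith
    have h2 : (N:ℝ) - 2 ≠ 0 := by linarith
    have h3 : (N:ℝ) - 3 ≠ 0 := by linarith
    simp only [Function.comp_apply, Pi.div_apply]
    show _ = qm2 N ⌊c * (N : ℝ)⌋₊
    rw [qm2, cast_choose_two', cast_choose_two', cast_choose_four', Nat.cast_sub hx]
    field_simp
    ring
  -- combine
  have hLdpos : 0 < 4 * c^3 * (1 - c) + 4 * c * (1 - c)^3 + 6 * c^2 * (1 - c)^2 := by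
    nlinarith [mul_pos hc0 (sub_pos.2 hc1), sq_nonneg (c - 1/2),
      mul_pos (mul_pos hc0 hc0) (mul_pos (sub_pos.2 hc1) (sub_pos.2 hc1))]
  have hnum := (hq1.sub hqm1).sub (hqm2.const_mul 2)
  have hden := (hq1.add hqm1).add hqm2
  have hratio := hnum.div hden hLdpos.ne'
  have hq : 6 * (c - (1 - Real.sqrt 13) / 6) * (c - (1 + Real.sqrt 13) / 6)
      = 6 * c ^ 2 - 2 * c - 2 := by linear_combination (-1/6 : ℝ) * hs
  refine ⟨?_, ?_, ?_⟩
  · have hval : (4 * c^3 * (1 - c) - 4 * c * (1 - c)^3 - 2 * (6 * c^2 * (1 - c)^2)) /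
        (4 * c^3 * (1 - c) + 4 * c * (1 - c)^3 + 6 * c^2 * (1 - c)^2)
        = 6 * (c - (1 - Real.sqrt 13) / 6) * (c - (1 + Real.sqrt 13) / 6)
          / (c ^ 2 - c + 2) := by
      rw [hq, div_eq_div_iff hLdpos.ne' hQpos.ne']
      ring
    rw [← hval]
    exact hratio
  · intro hlt
    rw [hq]
    apply div_neg_of_neg_of_pos _ hQpos
    have h1 : 0 < c - (1 - Real.sqrt 13) / 6 := by linarith
    have h2 : c - (1 + Real.sqrt 13) / 6 < 0 := by linarith
    nlinarith [mul_pos h1 (neg_pos.2 h2)]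
  · intro hlt
    rw [hq]
    apply div_pos _ hQpos
    have h1 : 0 < c - (1 - Real.sqrt 13) / 6 := by linarith
    have h2 : 0 < c - (1 + Real.sqrt 13) / 6 := by linarith
    nlinarith [mul_pos h1 h2]
end

section
/- For all integers 2 ≤ s ≤ N and 0 ≤ x ≤ N: Σ_{j=0}^{s} (x + j) · r_j(x) + Σ_{j=0}^{s} (x − j) · l_j(x) = x, where r_j and l_j are the transition probabilities of the proportional-rule public debate model. In particular Σ_{j=0}^{s} r_j(x) + Σ_{j=0}^{s} l_j(x) = 1, and the number of supporters of opinion +1 is a martingale: the expected state after one step from state x equals x. -/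
/-- `r_j(x) = C(x, s−j) C(N−x, j) ((s−j)/s) / C(N,s)`: probability that the
number of `+1` supporters increases by `j` in the proportional-rule public
debate model with population `N` and group size `s`. -/
noncomputable def rProb (N s x j : ℕ) : ℝ :=
  (x.choose (s - j) : ℝ) * ((N - x).choose j : ℝ) * (((s - j : ℕ) : ℝ) / (s : ℝ))
    / (N.choose s : ℝ)

/-- `l_j(x) = C(x, j) C(N−x, s−j) ((s−j)/s) / C(N,s)`: probability that the
number of `+1` supporters decreases by `j`. -/
noncomputable def lProb (N s x j : ℕ) : ℝ :=
  (x.choose j : ℝ) * ((N - x).choose (s - j) : ℝ) * (((s - j : ℕ) : ℝ) / (s : ℝ))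
    / (N.choose s : ℝ)

/-- Under the proportional rule the number of supporters of opinion `+1` is a
martingale: the transition probabilities sum to one, and the expected state
after one step from state `x` equals `x`. -/
theorem proportional_rule_martingale (N s x : ℕ) (hs : 2 ≤ s) (hsN : s ≤ N)
    (hx : x ≤ N) :
    ((∑ j ∈ Finset.range (s + 1), ((x : ℝ) + (j : ℝ)) * rProb N s x j)
      + ∑ j ∈ Finset.range (s + 1), ((x : ℝ) - (j : ℝ)) * lProb N s x j) = x
    ∧ ((∑ j ∈ Finset.range (s + 1), rProb N s x j)
      + ∑ j ∈ Finset.range (s + 1), lProb N s x j) = 1 := by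
  have hc : (N.choose s : ℝ) ≠ 0 := Nat.cast_ne_zero.mpr (Nat.choose_pos hsN).ne'
  have hs0 : (s : ℝ) ≠ 0 := Nat.cast_ne_zero.mpr (by omega)
  -- Vandermonde identity over ℝ
  have hvdm : ∑ j ∈ Finset.range (s + 1),
      (x.choose j : ℝ) * ((N - x).choose (s - j) : ℝ) = (N.choose s : ℝ) := by
    have h : ∑ j ∈ Finset.range (s + 1), x.choose j * (N - x).choose (s - j)
        = N.choose s := by
      have := Nat.add_choose_eq x (N - x) s
      rw [Nat.add_sub_cancel' hx] at this
      rw [this, Finset.Nat.sum_antidiagonal_eq_sum_range_succ_mk]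
    calc ∑ j ∈ Finset.range (s + 1), (x.choose j : ℝ) * ((N - x).choose (s - j) : ℝ)
        = ((∑ j ∈ Finset.range (s + 1), x.choose j * (N - x).choose (s - j) : ℕ) : ℝ) := by
          push_cast; ring_nf
      _ = (N.choose s : ℝ) := by rw [h]
  -- reindexing of the `r` sums
  have key : ∀ w : ℕ → ℝ,
      ∑ j ∈ Finset.range (s + 1), w j * rProb N s x j
        = ∑ j ∈ Finset.range (s + 1), w (s - j) *
            ((x.choose j : ℝ) * ((N - x).choose (s - j) : ℝ) * ((j : ℝ) / (s : ℝ))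
              / (N.choose s : ℝ)) := by
    intro w
    rw [← Finset.sum_range_reflect]
    refine Finset.sum_congr rfl fun j hj => ?_
    have hj' : j ≤ s := Nat.lt_succ_iff.mp (Finset.mem_range.mp hj)
    have h1 : s + 1 - 1 - j = s - j := by omega
    have h2 : s - (s - j) = j := by omega
    rw [h1]
    unfold rProb
    rw [h2]
  have hj2 : ∀ j ∈ Finset.range (s + 1), ((s - j : ℕ) : ℝ) = (s : ℝ) - (j : ℝ) := by
    intro j hj
    exact_mod_cast Nat.cast_sub (Nat.lt_succ_iff.mp (Finset.mem_range.mp hj))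
  constructor
  · rw [key (fun j => (x : ℝ) + (j : ℝ)), ← Finset.sum_add_distrib]
    have : ∀ j ∈ Finset.range (s + 1),
        ((x : ℝ) + ((s - j : ℕ) : ℝ)) *
            ((x.choose j : ℝ) * ((N - x).choose (s - j) : ℝ) * ((j : ℝ) / (s : ℝ))
              / (N.choose s : ℝ))
          + ((x : ℝ) - (j : ℝ)) * lProb N s x j
        = (x : ℝ) * ((x.choose j : ℝ) * ((N - x).choose (s - j) : ℝ)) / (N.choose s : ℝ) := by
      intro j hj
      unfold lProb
      rw [hj2 j hj]
      field_simp
      ring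
    rw [Finset.sum_congr rfl this, ← Finset.sum_div, ← Finset.mul_sum, hvdm,
      mul_div_assoc, div_self hc, mul_one]
  · have k1 := key (fun _ => (1 : ℝ))
    simp only [one_mul] at k1
    rw [k1, ← Finset.sum_add_distrib]
    have : ∀ j ∈ Finset.range (s + 1),
        ((x.choose j : ℝ) * ((N - x).choose (s - j) : ℝ) * ((j : ℝ) / (s : ℝ))
              / (N.choose s : ℝ))
          + lProb N s x j
        = (x.choose j : ℝ) * ((N - x).choose (s - j) : ℝ) / (N.choose s : ℝ) := by
      intro j hj
      unfold lProb
      rw [hj2 j hj]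
      field_simp
      ring
    rw [Finset.sum_congr rfl this, ← Finset.sum_div, hvdm, div_self hc]
end
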